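/- arXiv:2412.11994 — 5 statements merged into one kernel-verified Lean document; each statement's English description precedes it below -/
import Mathlib

section
/- For all real numbers l and u with 0 ≤ l < u ≤ 1, there exists a sequence x : ℕ → ℕ such that (a) for every natural number n, x(n) ≤ x(n+1) ≤ x(n) + 1, and (b) for every natural number n with n ≥ 1/(u−l), l·n ≤ x(n) ≤ u·n (equivalently l ≤ x(n)/n ≤ u). -/
/-- Existence of Static-BW shields: for welfare bounds `0 ≤ l < u ≤ 1` there is
a sequence of acceptance counts `x : ℕ → ℕ` that increases by `0` or `1` at
each step and satisfies `l·n ≤ x n ≤ u·n` for all `n ≥ 1/(u-l)`. -/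
theorem exists_staticBW_acceptance_sequence (l u : ℝ)
    (hl0 : 0 ≤ l) (hlu : l < u) (hu1 : u ≤ 1) :
    ∃ x : ℕ → ℕ,
      (∀ n : ℕ, x n ≤ x (n + 1) ∧ x (n + 1) ≤ x n + 1) ∧
      (∀ n : ℕ, 1 / (u - l) ≤ (n : ℝ) →
        l * (n : ℝ) ≤ (x n : ℝ) ∧ (x n : ℝ) ≤ u * (n : ℝ)) := by
  have hl1 : l ≤ 1 := le_trans (le_of_lt hlu) hu1
  refine ⟨fun n => ⌈l * n⌉₊, fun n => ⟨?_, ?_⟩, fun n hn => ⟨?_, ?_⟩⟩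
  · exact Nat.ceil_le_ceil (by
      have : (n : ℝ) ≤ (n + 1 : ℕ) := by push_cast; linarith
      nlinarith)
  · have h1 : l * ((n : ℕ) + 1 : ℕ) ≤ l * n + 1 := by push_cast; nlinarith
    calc ⌈l * ((n + 1 : ℕ) : ℝ)⌉₊ ≤ ⌈l * n + 1⌉₊ := Nat.ceil_le_ceil h1
      _ = ⌈l * n⌉₊ + 1 := Nat.ceil_add_one (by positivity)
  · exact Nat.le_ceil _
  · have hul : 0 < u - l := by linarith
    have hn1 : 1 ≤ (u - l) * n := by
      rw [div_le_iff₀ hul] at hn; linarith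
    have : (⌈l * n⌉₊ : ℝ) < l * n + 1 := Nat.ceil_lt_add_one (by positivity)
    nlinarith
end

section
/- Let A and B be positive natural numbers, let A1 ≤ A and B1 ≤ B be natural numbers with A1/A ≥ B1/B (real division), and let κ ≥ 0 be a real number with A1/A − B1/B ≤ κ. Let n_a and n_b be natural numbers satisfying 1/(A + n_a) + 1/(B + n_b) ≤ κ + (A1/A − B1/B). Set x = ⌊(A1/A)·n_a⌋ and y = ⌈(B1/B)·n_b⌉. Then |(A1 + x)/(A + n_a) − (B1 + y)/(B + n_b)| ≤ κ. -/
/-- Existence of dynamic fairness shields for demographic parity: if the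
history has bias `A1/A - B1/B ∈ [0, κ]` and the continuation satisfies the
balance assumption `1/(A+n_a) + 1/(B+n_b) ≤ κ + (A1/A - B1/B)`, then accepting
`⌊(A1/A)·n_a⌋` individuals of group `a` and `⌈(B1/B)·n_b⌉` of group `b` keeps
the demographic-parity bias within `κ`. -/
theorem dynamic_shield_exists_dp (A B A1 B1 : ℕ) (hA : 0 < A) (hB : 0 < B)
    (hA1 : A1 ≤ A) (hB1 : B1 ≤ B)
    (hord : (B1 : ℝ) / (B : ℝ) ≤ (A1 : ℝ) / (A : ℝ))
    (κ : ℝ) (hκ : 0 ≤ κ)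
    (hbias : (A1 : ℝ) / (A : ℝ) - (B1 : ℝ) / (B : ℝ) ≤ κ)
    (na nb : ℕ)
    (hbal : 1 / ((A : ℝ) + (na : ℝ)) + 1 / ((B : ℝ) + (nb : ℝ)) ≤
      κ + ((A1 : ℝ) / (A : ℝ) - (B1 : ℝ) / (B : ℝ))) :
    |((A1 : ℝ) + (⌊((A1 : ℝ) / (A : ℝ)) * (na : ℝ)⌋ : ℝ)) / ((A : ℝ) + (na : ℝ)) -
      ((B1 : ℝ) + (⌈((B1 : ℝ) / (B : ℝ)) * (nb : ℝ)⌉ : ℝ)) / ((B : ℝ) + (nb : ℝ))| ≤ κ := by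
  have hA' : (0:ℝ) < A := by exact_mod_cast hA
  have hB' : (0:ℝ) < B := by exact_mod_cast hB
  have hSa : (0:ℝ) < (A:ℝ) + na := by positivity
  have hSb : (0:ℝ) < (B:ℝ) + nb := by positivity
  set p := (A1:ℝ) / A with hp
  set q := (B1:ℝ) / B with hq
  have hpA : p * A = A1 := div_mul_cancel₀ _ (ne_of_gt hA')
  have hqB : q * B = B1 := div_mul_cancel₀ _ (ne_of_gt hB')
  have hx1 : ((⌊p * na⌋ : ℝ)) ≤ p * na := Int.floor_le _
  have hx2 : p * na - 1 < ((⌊p * na⌋ : ℝ)) := Int.sub_one_lt_floor _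
  have hy1 : q * nb ≤ ((⌈q * nb⌉ : ℝ)) := Int.le_ceil _
  have hy2 : ((⌈q * nb⌉ : ℝ)) < q * nb + 1 := Int.ceil_lt_add_one _
  have ha_up : ((A1:ℝ) + (⌊p * na⌋ : ℝ)) / ((A:ℝ) + na) ≤ p := by
    rw [div_le_iff₀ hSa]; nlinarith
  have ha_lo : p - 1 / ((A:ℝ) + na) ≤ ((A1:ℝ) + (⌊p * na⌋ : ℝ)) / ((A:ℝ) + na) := by
    rw [le_div_iff₀ hSa]
    have h1 : (1 / ((A:ℝ) + na)) * ((A:ℝ) + na) = 1 := by field_simp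
    nlinarith
  have hb_lo : q ≤ ((B1:ℝ) + (⌈q * nb⌉ : ℝ)) / ((B:ℝ) + nb) := by
    rw [le_div_iff₀ hSb]; nlinarith
  have hb_up : ((B1:ℝ) + (⌈q * nb⌉ : ℝ)) / ((B:ℝ) + nb) ≤ q + 1 / ((B:ℝ) + nb) := by
    rw [div_le_iff₀ hSb]
    have h1 : (1 / ((B:ℝ) + nb)) * ((B:ℝ) + nb) = 1 := by field_simp
    nlinarith
  rw [abs_le]
  constructor
  · linarith
  · linarith
end

section
/- Let T ≥ 3 be a natural number. The counter tuple (n_a, n_{a1}, n_b, n_{b1}) = (1, 0, T−1, 0) has demographic-parity bias |0/1 − 0/(T−1)| = 0, the tuple (T−1, T−1, 1, 1) has demographic-parity bias |(T−1)/(T−1) − 1/1| = 0, yet their componentwise sum (T, T−1, T, 1) has demographic-parity bias |(T−1)/T − 1/T| = 1 − 2/T. Consequently, for every real number κ with 0 < κ < 1 − 2/T, there exist two traces each with demographic-parity bias at most κ whose concatenation has demographic-parity bias strictly greater than κ. -/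
/-- Demographic-parity bias of a trace summarized by its four counters
`(n_a, n_{a1}, n_b, n_{b1})`: the numbers of appeared and accepted individuals
of groups `a` and `b`. -/
noncomputable def dpBias (na na1 nb nb1 : ℕ) : ℝ :=
  |(na1 : ℝ) / (na : ℝ) - (nb1 : ℝ) / (nb : ℝ)|

/-- Demographic-parity bounds are not closed under trace concatenation:
the traces with counters `(1, 0, T-1, 0)` and `(T-1, T-1, 1, 1)` each have
bias `0`, yet their componentwise sum `(T, T-1, T, 1)` has bias `1 - 2/T`;
hence for every `0 < κ < 1 - 2/T` there are two traces of bias at most `κ`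
whose concatenation has bias exceeding `κ`. -/
theorem staticFair_not_periodically_fair (T : ℕ) (hT : 3 ≤ T) :
    dpBias 1 0 (T - 1) 0 = 0 ∧
    dpBias (T - 1) (T - 1) 1 1 = 0 ∧
    dpBias T (T - 1) T 1 = 1 - 2 / (T : ℝ) ∧
    ∀ κ : ℝ, 0 < κ → κ < 1 - 2 / (T : ℝ) →
      ∃ na na1 nb nb1 ma ma1 mb mb1 : ℕ,
        0 < na ∧ 0 < nb ∧ 0 < ma ∧ 0 < mb ∧
        dpBias na na1 nb nb1 ≤ κ ∧
        dpBias ma ma1 mb mb1 ≤ κ ∧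
        κ < dpBias (na + ma) (na1 + ma1) (nb + mb) (nb1 + mb1) := by
  have hT0 : (0:ℝ) < T := by positivity
  have hT1 : (1:ℕ) ≤ T := by omega
  have hcast : ((T - 1 : ℕ) : ℝ) = (T : ℝ) - 1 := by
    push_cast [Nat.cast_sub hT1]; ring
  have hTm1 : ((T - 1 : ℕ) : ℝ) ≠ 0 := by
    rw [hcast]; have : (3:ℝ) ≤ T := by exact_mod_cast hT
    linarith
  have h1 : dpBias 1 0 (T - 1) 0 = 0 := by
    simp [dpBias]
  have h2 : dpBias (T - 1) (T - 1) 1 1 = 0 := by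
    simp [dpBias, div_self hTm1]
  have h3 : dpBias T (T - 1) T 1 = 1 - 2 / (T : ℝ) := by
    have h3' : (3:ℝ) ≤ T := by exact_mod_cast hT
    rw [dpBias, hcast]
    push_cast
    rw [div_sub_div_same, abs_of_nonneg (by apply div_nonneg <;> linarith)]
    rw [div_eq_iff (ne_of_gt hT0)]; field_simp; ring
  refine ⟨h1, h2, h3, ?_⟩
  intro κ hκ0 hκ
  refine ⟨1, 0, T - 1, 0, T - 1, T - 1, 1, 1, by norm_num, by omega, by omega,
    by norm_num, by rw [h1]; exact hκ0.le, by rw [h2]; exact hκ0.le, ?_⟩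
  have e1 : 1 + (T - 1) = T := by omega
  have e2 : 0 + (T - 1) = T - 1 := by omega
  have e3 : T - 1 + 1 = T := by omega
  rw [e1, e2, e3]
  simpa [h3] using hκ
end

section
/- Let T and K be natural numbers with 1 ≤ K and 2K < T. Then (i) 1/K − 1/(T−K) = (T−2K)/((T−K)·K); (ii) (T−K−1)/(T−K) − (K−1)/K = (T−2K)/((T−K)·K); and (iii) (T−K)/T − K/T = (T−2K)/T. Moreover, for every real number ε > 0 there exist natural numbers K ≥ 1 and T > 2K such that (T−2K)/((T−K)·K) < ε and (T−2K)/T > 1 − ε. -/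
/-- A family of counterexamples to closure of demographic parity under
concatenation: the biases of the traces with counters `(K, 1, T-K, 1)` and
`(T-K, T-K-1, K, K-1)` both equal `(T-2K)/((T-K)·K)`, the bias of their
concatenation equals `(T-2K)/T`, and for every `ε > 0` one can choose
`K ≥ 1` and `T > 2K` to make the former `< ε` and the latter `> 1 - ε`. -/
theorem dp_counterexample_family (T K : ℕ) (hK : 1 ≤ K) (hT : 2 * K < T) :
    (1 / (K : ℝ) - 1 / ((T : ℝ) - (K : ℝ)) =
      ((T : ℝ) - 2 * (K : ℝ)) / (((T : ℝ) - (K : ℝ)) * (K : ℝ))) ∧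
    (((T : ℝ) - (K : ℝ) - 1) / ((T : ℝ) - (K : ℝ)) - ((K : ℝ) - 1) / (K : ℝ) =
      ((T : ℝ) - 2 * (K : ℝ)) / (((T : ℝ) - (K : ℝ)) * (K : ℝ))) ∧
    (((T : ℝ) - (K : ℝ)) / (T : ℝ) - (K : ℝ) / (T : ℝ) =
      ((T : ℝ) - 2 * (K : ℝ)) / (T : ℝ)) ∧
    ∀ ε : ℝ, 0 < ε → ∃ K' T' : ℕ, 1 ≤ K' ∧ 2 * K' < T' ∧
      ((T' : ℝ) - 2 * (K' : ℝ)) / (((T' : ℝ) - (K' : ℝ)) * (K' : ℝ)) < ε ∧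
      1 - ε < ((T' : ℝ) - 2 * (K' : ℝ)) / (T' : ℝ) := by
  have hK' : (1 : ℝ) ≤ (K : ℝ) := by exact_mod_cast hK
  have hT' : 2 * (K : ℝ) < (T : ℝ) := by exact_mod_cast hT
  have hKpos : (0 : ℝ) < (K : ℝ) := by linarith
  have hTKpos : (0 : ℝ) < (T : ℝ) - (K : ℝ) := by linarith
  have hTpos : (0 : ℝ) < (T : ℝ) := by linarith
  refine ⟨by field_simp; ring, by field_simp; ring, by field_simp; ring, ?_⟩
  intro ε hε
  obtain ⟨N, hN⟩ := exists_nat_gt (2 / ε + 3)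
  have hNR : (2 / ε + 3 : ℝ) < N := hN
  have h2e : 0 < 2 / ε := by positivity
  have hN3 : (3 : ℝ) < (N : ℝ) := by linarith
  have hN3n : 3 < N := by exact_mod_cast hN3
  refine ⟨N, N * N, by omega, by nlinarith [hN3n], ?_, ?_⟩
  · have hNpos : (0 : ℝ) < (N : ℝ) := by linarith
    have hcast : ((N * N : ℕ) : ℝ) = (N : ℝ) * (N : ℝ) := by push_cast; ring
    rw [hcast]
    have hden : (0 : ℝ) < ((N : ℝ) * N - N) * N := by nlinarith
    rw [div_lt_iff₀ hden]
    have h2N : 2 / ε < (N : ℝ) := by linarith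
    have heN : 2 < ε * N := by
      have := (div_lt_iff₀ hε).mp h2N
      linarith
    nlinarith [heN, hNpos, hε.le]
  · have hNpos : (0 : ℝ) < (N : ℝ) := by linarith
    have hcast : ((N * N : ℕ) : ℝ) = (N : ℝ) * (N : ℝ) := by push_cast; ring
    rw [hcast]
    have hden : (0 : ℝ) < (N : ℝ) * N := by positivity
    rw [lt_div_iff₀ hden]
    have h2N : 2 / ε < (N : ℝ) := by linarith
    have heN : 2 < ε * N := by
      have := (div_lt_iff₀ hε).mp h2N
      linarith
    nlinarith [heN, hNpos]
end

section
/- Fix a finite input alphabet X = G × B × C, where G = {a,b}, B = {0,1}, and C is a finite set of nonnegative real costs, an output alphabet Y = B, a function θ : X → ℝ with θ(x) > 0 for every x ∈ X and Σ_{x∈X} θ(x) = 1, a horizon T ∈ ℕ, a function φ from finite sequences over X × Y to ℝ (the fairness property), and a threshold κ ∈ ℝ. For a finite sequence (trace) τ over X × Y of length at most T, define v(τ) ∈ [0,∞] (the extended nonnegative reals) as the infimum, over all functions π that map each pair (σ, x) of a trace σ of length less than T − |τ| and an input x ∈ X to an output in Y and that satisfy φ(ττ') ≤ κ for every length-(T−|τ|)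 continuation τ' = (x_1,y_1)…(x_{T−|τ|}, y_{T−|τ|}) in which each y_i equals π applied to the preceding portion of τ' and x_i, of the expected cost Σ_{τ'} (Π_{i} θ(x_i)) · (Σ_i c_i·1[y_i ≠ r_i]), where the outer sum ranges over all continuations τ' generated by π and each x_i = (g_i, r_i, c_i); the infimum over the empty set is ∞. Then: (1) if |τ| = T, then v(τ) = 0 when φ(τ) ≤ κ and v(τ) = ∞ otherwise; and (2) if |τ| < T, then v(τ) = Σ_{x=(g,r,c)∈X} θ(x) · min( v(τ·(x,r)), c + v(τ·(x,1−r)) ). -/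
open scoped ENNReal
open Classical

/-- The input alphabet `X = G × B × C`: a group in `G = {a,b}` (modelled as
`Bool`), a recommended decision in `B = {0,1}` (modelled as `Bool`), and an
intervention cost drawn from a finite set `C` of real costs. -/
abbrev ShieldInput (C : Finset ℝ) := Bool × Bool × {c // c ∈ C}

/-- A trace entry: an input together with the final decision in `Y = B`. -/
abbrev ShieldEntry (C : Finset ℝ) := ShieldInput C × Bool

/-- A continuation `τ'` is generated by the shield `π` if each of its decisions
`y_i` equals `π` applied to the preceding portion of `τ'` and the input `x_i`. -/
def Generated {C : Finset ℝ} (π : List (ShieldEntry C) → ShieldInput C → Bool)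
    (τ' : List (ShieldEntry C)) : Prop :=
  ∀ i (h : i < τ'.length),
    (τ'.get ⟨i, h⟩).2 = π (τ'.take i) (τ'.get ⟨i, h⟩).1

/-- Total intervention cost `Σ_i c_i·1[y_i ≠ r_i]` of a trace. -/
def traceCost {C : Finset ℝ} (τ' : List (ShieldEntry C)) : ℝ :=
  (τ'.map fun e => if e.2 ≠ e.1.2.1 then (e.1.2.2 : ℝ) else 0).sum

/-- Probability weight `Π_i θ(x_i)` of a trace. -/
def traceProb {C : Finset ℝ} (θ : ShieldInput C → ℝ)
    (τ' : List (ShieldEntry C)) : ℝ :=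
  (τ'.map fun e => θ e.1).prod

/-- Expected total intervention cost of the shield `π` over the horizon `t`:
the sum, over all length-`t` continuations generated by `π` (encoded as
functions `Fin t → X × Y`), of the probability of the continuation times its
intervention cost. -/
noncomputable def expCost {C : Finset ℝ} (θ : ShieldInput C → ℝ)
    (π : List (ShieldEntry C) → ShieldInput C → Bool) (t : ℕ) : ℝ :=
  ∑ f ∈ Finset.univ.filter
      (fun f : Fin t → ShieldEntry C => Generated π (List.ofFn f)),
    traceProb θ (List.ofFn f) * traceCost (List.ofFn f)

/-- The optimal conditional expected cost `v(τ) ∈ [0,∞]` after the prefix `τ`: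
the infimum, over all shields `π` all of whose generated length-`(T-|τ|)`
continuations `τ'` satisfy `φ(ττ') ≤ κ`, of the expected intervention cost of
`π` over the horizon `T - |τ|` (the infimum of the empty set being `∞`). -/
noncomputable def shieldValue {C : Finset ℝ} (θ : ShieldInput C → ℝ)
    (φ : List (ShieldEntry C) → ℝ) (κ : ℝ) (T : ℕ)
    (τ : List (ShieldEntry C)) : ℝ≥0∞ :=
  ⨅ π ∈ {π : List (ShieldEntry C) → ShieldInput C → Bool |
      ∀ τ' : List (ShieldEntry C),
        τ'.length = T - τ.length → Generated π τ' → φ (τ ++ τ') ≤ κ},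
    ENNReal.ofReal (expCost θ π (T - τ.length))

/-!
Below the horizon, a shield amounts to a first decision `y x` for every input `x` together with,
for every `x`, a shield for the remaining game after `(x, y x)`. Because `θ` sums to one, the
expected cost splits as `Σ_x θ(x) · (step cost + expected cost of the continuation)`, and
feasibility splits input by input. The choices for different inputs being independent, the
infimum of the weighted sum is the weighted sum of the infima, and for a single input the infimum
is the minimum over the two decisions of the step cost plus the value of the extended prefix.
-/
abbrev Shield (C : Finset ℝ) := List (ShieldEntry C) → ShieldInput C → Bool

namespace Shield

variable {C : Finset ℝ}

def shift (π : Shield C) (e : ShieldEntry C) : Shield C := fun σ x => π (e :: σ) x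

def glue (first : ShieldInput C → Bool) (next : ShieldInput C → Shield C) : Shield C
  | [], x => first x
  | e :: σ, x => next e.1 σ x

end Shield

open Shield

variable {C : Finset ℝ}

theorem generated_cons_iff (π : Shield C) (e : ShieldEntry C) (l : List (ShieldEntry C)) :
    Generated π (e :: l) ↔ e.2 = π [] e.1 ∧ Generated (π.shift e) l := by
  constructor
  · intro h
    exact ⟨h 0 (by simp), fun i hi => by simpa [shift] using h (i + 1) (by simpa using hi)⟩
  · rintro ⟨h0, h⟩ (_ | i) hi
    · simpa using h0
    · simpa [shift] using h i (by simpa using hi)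

noncomputable def generatedSum (π : Shield C) (t : ℕ) (F : List (ShieldEntry C) → ℝ) : ℝ :=
  ∑ f ∈ Finset.univ.filter (fun f : Fin t → ShieldEntry C => Generated π (List.ofFn f)),
    F (List.ofFn f)

theorem generatedSum_zero (π : Shield C) (F : List (ShieldEntry C) → ℝ) :
    generatedSum π 0 F = F [] := by
  rw [generatedSum, Finset.sum_filter, Fintype.sum_unique]
  simp [Generated]

theorem generatedSum_succ (π : Shield C) (t : ℕ) (F : List (ShieldEntry C) → ℝ) :
    generatedSum π (t + 1) F =
      ∑ x : ShieldInput C,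
        generatedSum (π.shift (x, π [] x)) t (fun l => F ((x, π [] x) :: l)) := by
  have sum_cons : ∀ G : (Fin (t + 1) → ShieldEntry C) → ℝ,
      ∑ f, G f = ∑ e : ShieldEntry C, ∑ g : Fin t → ShieldEntry C, G (Fin.cons e g) := by
    intro G
    rw [← Fintype.sum_prod_type' fun e g => G (Fin.cons e g)]
    exact (Fintype.sum_equiv (Fin.consEquiv fun _ => ShieldEntry C) _ _ fun _ => rfl).symm
  simp only [generatedSum, Finset.sum_filter, sum_cons, List.ofFn_succ, Fin.cons_zero,
    Fin.cons_succ, generated_cons_iff]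
  rw [Fintype.sum_prod_type]
  refine Finset.sum_congr rfl fun x _ => ?_
  rw [Finset.sum_comm]
  refine Finset.sum_congr rfl fun g _ => ?_
  rw [Fintype.sum_eq_single (π [] x) fun y hy => by simp [hy]]
  simp

theorem generatedSum_mul_left (π : Shield C) (t : ℕ) (c : ℝ) (F : List (ShieldEntry C) → ℝ) :
    generatedSum π t (fun l => c * F l) = c * generatedSum π t F :=
  (Finset.mul_sum _ _ _).symm

theorem generatedSum_add (π : Shield C) (t : ℕ) (F G : List (ShieldEntry C) → ℝ) :
    generatedSum π t (fun l => F l + G l) = generatedSum π t F + generatedSum π t G :=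
  Finset.sum_add_distrib

theorem traceProb_cons (θ : ShieldInput C → ℝ) (e : ShieldEntry C) (l : List (ShieldEntry C)) :
    traceProb θ (e :: l) = θ e.1 * traceProb θ l :=
  List.prod_cons

theorem traceProb_nonneg {θ : ShieldInput C → ℝ} (hθ : ∀ x, 0 ≤ θ x) (l : List (ShieldEntry C)) :
    0 ≤ traceProb θ l :=
  List.prod_nonneg fun _ h => by
    obtain ⟨e, -, rfl⟩ := List.mem_map.1 h
    exact hθ e.1

theorem generatedSum_traceProb {θ : ShieldInput C → ℝ} (hθsum : ∑ x, θ x = 1) (π : Shield C)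
    (t : ℕ) : generatedSum π t (traceProb θ) = 1 := by
  induction t generalizing π with
  | zero => simp [generatedSum_zero, traceProb]
  | succ t ih =>
    simp only [generatedSum_succ, traceProb_cons, generatedSum_mul_left, ih, mul_one, hθsum]

def stepCost (x : ShieldInput C) (y : Bool) : ℝ :=
  if y ≠ x.2.1 then x.2.2 else 0

theorem stepCost_nonneg (hC : ∀ c ∈ C, 0 ≤ c) (x : ShieldInput C) (y : Bool) :
    0 ≤ stepCost x y := by
  unfold stepCost
  split
  · exact hC _ x.2.2.2
  · rfl

theorem traceCost_cons (e : ShieldEntry C) (l : List (ShieldEntry C)) :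
    traceCost (e :: l) = stepCost e.1 e.2 + traceCost l :=
  List.sum_cons

theorem traceCost_nonneg (hC : ∀ c ∈ C, 0 ≤ c) (l : List (ShieldEntry C)) : 0 ≤ traceCost l :=
  List.sum_nonneg fun _ h => by
    obtain ⟨e, -, rfl⟩ := List.mem_map.1 h
    exact stepCost_nonneg hC e.1 e.2

theorem expCost_eq_generatedSum (θ : ShieldInput C → ℝ) (π : Shield C) (t : ℕ) :
    expCost θ π t = generatedSum π t (fun l => traceProb θ l * traceCost l) :=
  rfl

theorem expCost_nonneg (hC : ∀ c ∈ C, 0 ≤ c) {θ : ShieldInput C → ℝ} (hθ : ∀ x, 0 ≤ θ x)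
    (π : Shield C) (t : ℕ) : 0 ≤ expCost θ π t :=
  Finset.sum_nonneg fun _ _ => mul_nonneg (traceProb_nonneg hθ _) (traceCost_nonneg hC _)

theorem expCost_zero (θ : ShieldInput C → ℝ) (π : Shield C) : expCost θ π 0 = 0 := by
  simp [expCost_eq_generatedSum, generatedSum_zero, traceCost]

theorem expCost_succ {θ : ShieldInput C → ℝ} (hθsum : ∑ x, θ x = 1) (π : Shield C) (t : ℕ) :
    expCost θ π (t + 1) =
      ∑ x, θ x * (stepCost x (π [] x) + expCost θ (π.shift (x, π [] x)) t) := by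
  simp only [expCost_eq_generatedSum, generatedSum_succ, traceProb_cons, traceCost_cons, mul_add,
    mul_assoc, mul_comm (traceProb θ _) (stepCost _ _), generatedSum_mul_left, generatedSum_add,
    generatedSum_traceProb hθsum, mul_one]

theorem ofReal_expCost_succ (hC : ∀ c ∈ C, 0 ≤ c) {θ : ShieldInput C → ℝ} (hθ : ∀ x, 0 ≤ θ x)
    (hθsum : ∑ x, θ x = 1) (π : Shield C) (t : ℕ) :
    ENNReal.ofReal (expCost θ π (t + 1)) =
      ∑ x, ENNReal.ofReal (θ x) * (ENNReal.ofReal (stepCost x (π [] x)) +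
        ENNReal.ofReal (expCost θ (π.shift (x, π [] x)) t)) := by
  have hstep := stepCost_nonneg hC
  have hexp := expCost_nonneg hC hθ
  rw [expCost_succ hθsum, ENNReal.ofReal_sum_of_nonneg fun x _ =>
    mul_nonneg (hθ x) (add_nonneg (hstep _ _) (hexp _ _))]
  simp only [ENNReal.ofReal_mul (hθ _), ENNReal.ofReal_add (hstep _ _) (hexp _ _)]

theorem ENNReal.iInf_pi_sum {α : Type*} [Fintype α] {S : α → Type*} (f : ∀ a, S a → ℝ≥0∞) :
    ⨅ g : (∀ a, S a), ∑ a, f a (g a) = ∑ a, ⨅ s, f a s := by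
  by_cases hS : ∀ a, Nonempty (S a)
  · have : Nonempty (∀ a, S a) := ⟨fun a => (hS a).some⟩
    -- pointwise minima of two choice functions witness the directedness that `iInf_sum` needs
    refine (ENNReal.iInf_sum (f := fun g a => f a (g a)) fun _ g₁ g₂ =>
      ⟨fun a => if f a (g₁ a) ≤ f a (g₂ a) then g₁ a else g₂ a, fun a _ => ?_⟩).trans
        (Finset.sum_congr rfl fun a _ => (@Function.surjective_eval _ _ hS a).iInf_comp (f a))
    dsimp only
    split_ifs with h
    · exact ⟨le_rfl, h⟩
    · exact ⟨(not_le.1 h).le, le_rfl⟩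
  · obtain ⟨a, ha⟩ := not_forall.1 hS
    have : IsEmpty (∀ a, S a) := ⟨fun g => ha ⟨g a⟩⟩
    rw [iInf_of_empty, eq_comm, ENNReal.sum_eq_top]
    exact ⟨a, Finset.mem_univ a, @iInf_of_empty _ _ _ (not_nonempty_iff.1 ha) _⟩

section Bellman

variable (φ : List (ShieldEntry C) → ℝ) (κ : ℝ) (T : ℕ)

def Feasible (τ : List (ShieldEntry C)) (π : Shield C) : Prop :=
  ∀ τ' : List (ShieldEntry C), τ'.length = T - τ.length → Generated π τ' → φ (τ ++ τ') ≤ κ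

theorem shieldValue_eq_iInf (θ : ShieldInput C → ℝ) (τ : List (ShieldEntry C)) :
    shieldValue θ φ κ T τ =
      ⨅ π : {π : Shield C // Feasible φ κ T τ π}, ENNReal.ofReal (expCost θ π (T - τ.length)) :=
  (iInf_subtype'' _ _).symm

theorem feasible_iff_forall_shift {τ : List (ShieldEntry C)} (hτ : τ.length < T) (π : Shield C) :
    Feasible φ κ T τ π ↔
      ∀ x, Feasible φ κ T (τ ++ [(x, π [] x)]) (π.shift (x, π [] x)) := by
  have hlen : T - τ.length = T - (τ.length + 1) + 1 := by omega
  simp only [Feasible, List.length_append, List.length_singleton, hlen]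
  constructor
  · intro h x τ' hl hg
    simpa using h ((x, π [] x) :: τ') (by simp [hl]) ((generated_cons_iff _ _ _).2 ⟨rfl, hg⟩)
  · rintro h (_ | ⟨⟨x, y⟩, τ'⟩) hl hg
    · simp at hl
    · obtain ⟨hy, hg⟩ := (generated_cons_iff _ _ _).1 hg
      dsimp only at hy
      subst hy
      simpa using h x τ' (by simpa using hl) hg

theorem shieldValue_of_length_eq (θ : ShieldInput C → ℝ) {τ : List (ShieldEntry C)}
    (hτ : τ.length = T) : shieldValue θ φ κ T τ = if φ τ ≤ κ then 0 else ⊤ := by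
  have feasible_iff (π : Shield C) : Feasible φ κ T τ π ↔ φ τ ≤ κ := by
    simp [Feasible, hτ, List.length_eq_zero_iff, Generated]
  rw [shieldValue_eq_iInf, hτ, Nat.sub_self]
  simp only [expCost_zero, ENNReal.ofReal_zero]
  split_ifs with h
  · have : Nonempty {π : Shield C // Feasible φ κ T τ π} :=
      ⟨⟨fun _ _ => true, (feasible_iff _).2 h⟩⟩
    exact iInf_const
  · have : IsEmpty {π : Shield C // Feasible φ κ T τ π} :=
      ⟨fun π => h ((feasible_iff π).1 π.2)⟩
    exact iInf_of_empty _

abbrev StepChoice (τ : List (ShieldEntry C)) (x : ShieldInput C) :=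
  Σ y : Bool, {p : Shield C // Feasible φ κ T (τ ++ [(x, y)]) p}

variable {φ κ T} in
noncomputable def StepChoice.cost (θ : ShieldInput C → ℝ) {τ : List (ShieldEntry C)}
    {x : ShieldInput C} (s : StepChoice φ κ T τ x) : ℝ≥0∞ :=
  ENNReal.ofReal (θ x) * (ENNReal.ofReal (stepCost x s.1) +
    ENNReal.ofReal (expCost θ s.2.1 (T - (τ.length + 1))))

theorem shieldValue_eq_iInf_pi (hC : ∀ c ∈ C, 0 ≤ c) {θ : ShieldInput C → ℝ}
    (hθ : ∀ x, 0 ≤ θ x) (hθsum : ∑ x, θ x = 1) {τ : List (ShieldEntry C)} (hτ : τ.length < T) :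
    shieldValue θ φ κ T τ = ⨅ g : (∀ x, StepChoice φ κ T τ x), ∑ x, (g x).cost θ := by
  have hlen : T - τ.length = T - (τ.length + 1) + 1 := by omega
  rw [shieldValue_eq_iInf, hlen]
  refine le_antisymm (le_iInf fun g => ?_) (le_iInf fun π => ?_)
  · refine iInf_le_of_le ⟨glue (fun x => (g x).1) (fun x => (g x).2.1),
      (feasible_iff_forall_shift φ κ T hτ _).2 fun x => (g x).2.2⟩ ?_
    rw [ofReal_expCost_succ hC hθ hθsum]
    exact le_of_eq (Finset.sum_congr rfl fun x _ => rfl)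
  · refine iInf_le_of_le (fun x => ⟨π.1 [] x, π.1.shift (x, π.1 [] x),
      (feasible_iff_forall_shift φ κ T hτ _).1 π.2 x⟩) ?_
    rw [ofReal_expCost_succ hC hθ hθsum]
    exact le_of_eq (Finset.sum_congr rfl fun x _ => rfl)

theorem iInf_stepChoice_cost (θ : ShieldInput C → ℝ) {x : ShieldInput C} (hx : 0 < θ x)
    (τ : List (ShieldEntry C)) :
    ⨅ s : StepChoice φ κ T τ x, s.cost θ =
      ENNReal.ofReal (θ x) * min (shieldValue θ φ κ T (τ ++ [(x, x.2.1)]))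
        (ENNReal.ofReal x.2.2 + shieldValue θ φ κ T (τ ++ [(x, !x.2.1)])) := by
  have hv (y : Bool) : shieldValue θ φ κ T (τ ++ [(x, y)]) =
      ⨅ p : {p : Shield C // Feasible φ κ T (τ ++ [(x, y)]) p},
        ENNReal.ofReal (expCost θ p (T - (τ.length + 1))) := by
    rw [shieldValue_eq_iInf, List.length_append, List.length_singleton]
  simp only [StepChoice.cost]
  rw [← ENNReal.mul_iInf_of_ne (by simpa using hx) ENNReal.ofReal_ne_top, iInf_sigma]
  congr 1
  simp only [hv, ← ENNReal.add_iInf, iInf_bool_eq]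
  obtain ⟨g, r, c⟩ := x
  cases r
  all_goals simp only [stepCost, ne_eq, Bool.true_eq_false, Bool.false_eq_true, not_false_eq_true,
    not_true_eq_false, ↓reduceIte, ENNReal.ofReal_zero, zero_add]
  exacts [min_comm _ _, rfl]

end Bellman

/-- Bellman recursion for cost-optimal bounded-horizon fairness shields:
(1) at the horizon, `v(τ)` is `0` if `φ(τ) ≤ κ` and `∞` otherwise;
(2) below the horizon, `v(τ) = Σ_{x=(g,r,c)} θ(x) · min(v(τ·(x,r)), c + v(τ·(x,¬r)))`. -/
theorem shieldValue_bellman (C : Finset ℝ) (hC : ∀ c ∈ C, 0 ≤ c)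
    (θ : ShieldInput C → ℝ) (hθpos : ∀ x, 0 < θ x)
    (hθsum : ∑ x : ShieldInput C, θ x = 1)
    (T : ℕ) (φ : List (ShieldEntry C) → ℝ) (κ : ℝ) :
    (∀ τ : List (ShieldEntry C), τ.length = T →
      shieldValue θ φ κ T τ = if φ τ ≤ κ then 0 else ⊤) ∧
    (∀ τ : List (ShieldEntry C), τ.length < T →
      shieldValue θ φ κ T τ =
        ∑ x : ShieldInput C, ENNReal.ofReal (θ x) *
          min (shieldValue θ φ κ T (τ ++ [(x, x.2.1)]))
            (ENNReal.ofReal (x.2.2 : ℝ) +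
              shieldValue θ φ κ T (τ ++ [(x, !x.2.1)]))) := by
  refine ⟨fun τ hτ => shieldValue_of_length_eq φ κ T θ hτ, fun τ hτ => ?_⟩
  rw [shieldValue_eq_iInf_pi φ κ T hC (fun x => (hθpos x).le) hθsum hτ, ENNReal.iInf_pi_sum]
  exact Finset.sum_congr rfl fun x _ => iInf_stepChoice_cost φ κ T θ (hθpos x) τ
end
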